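/- arXiv:2501.02323 — 5 statements merged into one kernel-verified Lean document; each statement's English description precedes it below -/
import Mathlib

section
/- Let x' be a 0–1 sequence with associated real x, and let p ∈ ℕ. If x is p-rational and x'(m) = 0 for some m > p, then x'(m) = 0 for all m > p. -/
/-!
Multiplying by `2 ^ p` shifts the binary point: `x * 2 ^ p = N + t` with `N` a natural number
and `t` the real associated to the tail digits `x'(p+1), x'(p+2), …`. If `x` is `p`-rational,
`t` is an integer; it lies in `[0, 1)`, strictly below `1` because one tail digit vanishes.
Hence `t = 0`, and a series of nonnegative terms vanishes only if every digit does.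
-/

def IsZeroOne (x' : ℕ → ℕ) : Prop := ∀ i, 1 ≤ i → x' i = 0 ∨ x' i = 1

/-- The real number associated to a 0–1 sequence: `Σ_{i=1}^∞ x'(i)·2^{-i}`. -/
noncomputable def assocReal (x' : ℕ → ℕ) : ℝ := ∑' i : ℕ, (x' (i + 1) : ℝ) / 2 ^ (i + 1)

def IsPRational (p : ℕ) (y : ℝ) : Prop := ∃ q : ℕ, y * 2 ^ p = (q : ℝ)

theorem assocReal_nonneg (x' : ℕ → ℕ) : 0 ≤ assocReal x' :=
  tsum_nonneg fun _ ↦ by positivity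

theorem assocReal_const_one : assocReal (fun _ ↦ 1) = 1 := by
  conv_rhs => rw [← tsum_geometric_two' 1]
  simp only [assocReal, Nat.cast_one, pow_succ', div_div]

namespace IsZeroOne

variable {x' : ℕ → ℕ}

theorem comp_add_right (hx' : IsZeroOne x') (k : ℕ) : IsZeroOne fun n ↦ x' (n + k) :=
  fun i hi ↦ hx' (i + k) (by omega)

theorem le_one (hx' : IsZeroOne x') {i : ℕ} (hi : 1 ≤ i) : x' i ≤ 1 := by
  rcases hx' i hi with h | h <;> simp [h]

theorem summable_div_two_pow (hx' : IsZeroOne x') :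
    Summable fun i : ℕ ↦ (x' (i + 1) : ℝ) / 2 ^ (i + 1) := by
  refine .of_nonneg_of_le (fun i ↦ by positivity) (fun i ↦ ?_)
    ((summable_nat_add_iff 1).mpr summable_geometric_two)
  rw [one_div_pow, div_eq_mul_one_div]
  exact mul_le_of_le_one_left (by positivity) (mod_cast hx'.le_one (Nat.le_add_left 1 i))

theorem assocReal_lt_one (hx' : IsZeroOne x') {m : ℕ} (hm : 1 ≤ m)
    (hm0 : x' m = 0) : assocReal x' < 1 := by
  rw [← assocReal_const_one]
  obtain ⟨i, rfl⟩ : ∃ i, m = i + 1 := ⟨m - 1, by omega⟩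
  refine Summable.tsum_lt_tsum_of_nonneg (i := i) (fun _ ↦ by positivity) (fun j ↦ ?_) ?_
    (summable_div_two_pow (x' := fun _ ↦ 1) fun _ _ ↦ .inr rfl)
  · gcongr
    exact_mod_cast hx'.le_one (Nat.le_add_left 1 j)
  · rw [hm0, Nat.cast_zero, zero_div]
    positivity

theorem eq_zero_of_assocReal_eq_zero (hx' : IsZeroOne x')
    (h : assocReal x' = 0) {m : ℕ} (hm : 1 ≤ m) : x' m = 0 := by
  obtain ⟨i, rfl⟩ : ∃ i, m = i + 1 := ⟨m - 1, by omega⟩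
  have hsum := hx'.summable_div_two_pow.hasSum
  rw [← assocReal, h, hasSum_zero_iff_of_nonneg fun _ ↦ by positivity] at hsum
  simpa using congrFun hsum i

theorem assocReal_mul_two (hx' : IsZeroOne x') :
    assocReal x' * 2 = x' 1 + assocReal fun n ↦ x' (n + 1) := by
  rw [assocReal, hx'.summable_div_two_pow.tsum_eq_zero_add, add_mul, assocReal, ← tsum_mul_right]
  congr 1
  · simp
  · refine tsum_congr fun i ↦ ?_
    rw [pow_succ _ (i + 1)]
    field_simp

theorem exists_assocReal_mul_two_pow (hx' : IsZeroOne x') (p : ℕ) :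
    ∃ N : ℕ, assocReal x' * 2 ^ p = N + assocReal fun n ↦ x' (n + p) := by
  induction p with
  | zero => exact ⟨0, by simp⟩
  | succ p ih =>
    obtain ⟨N, hN⟩ := ih
    refine ⟨2 * N + x' (p + 1), ?_⟩
    rw [pow_succ, ← mul_assoc, hN, add_mul, (hx'.comp_add_right p).assocReal_mul_two]
    simp only [Nat.cast_add, Nat.cast_mul, Nat.cast_ofNat, add_assoc, add_comm 1 p]
    ring_nf

end IsZeroOne

theorem eq_zero_of_natCast_add_eq_natCast {N q : ℕ} {t : ℝ} (h : (N : ℝ) + t = q)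
    (ht0 : 0 ≤ t) (ht1 : t < 1) : t = 0 := by
  have hint : (((q : ℤ) - N : ℤ) : ℝ) = t := by push_cast; linarith
  rw [← hint] at ht0 ht1 ⊢
  have : (q : ℤ) - N = 0 := by
    have hnonneg : (0 : ℤ) ≤ q - N := by exact_mod_cast ht0
    have hlt : (q : ℤ) - N < 1 := by exact_mod_cast ht1
    omega
  simp [this]

/-- If `x` is `p`-rational and `x'(m) = 0` for some `m > p`, then `x'(m) = 0`
for all `m > p`. -/
theorem stmt2 (x' : ℕ → ℕ) (hx' : IsZeroOne x') (x : ℝ) (hx : x = assocReal x')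
    (p : ℕ) (hrat : IsPRational p x) (hsome : ∃ m, p < m ∧ x' m = 0) :
    ∀ m, p < m → x' m = 0 := by
  subst hx
  obtain ⟨q, hq⟩ := hrat
  obtain ⟨N, hN⟩ := hx'.exists_assocReal_mul_two_pow p
  have htail := hx'.comp_add_right p
  obtain ⟨m, hpm, hm0⟩ := hsome
  have hzero : (assocReal fun n ↦ x' (n + p)) = 0 :=
    eq_zero_of_natCast_add_eq_natCast (hN ▸ hq) (assocReal_nonneg _)
      (htail.assocReal_lt_one (m := m - p) (by omega) (by rwa [Nat.sub_add_cancel hpm.le]))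
  intro m' hpm'
  simpa [Nat.sub_add_cancel hpm'.le] using
    htail.eq_zero_of_assocReal_eq_zero hzero (m := m' - p) (by omega)
end

section
/- Let x' be a 0–1 sequence with associated real x, let p ≥ 1, and assume x'(i) = 0 for some i > p. If y is a real number which is (p−1)-rational and satisfies 0 < x − y < 1/2^p, then y = Σ_{i=1}^{p−1} x'(i)·2^{−i}; in particular such a y is unique, and its binary expansion agrees with x' at every index below p. -/
/-! The partial sum `s` of the first `p - 1` binary digits lies within `1/2^(p-1)` below `x`,
so `|y - s| < 1/2^(p-1)`; two `(p-1)`-rational reals that close together coincide. -/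

namespace IsZeroOne

variable {x' : ℕ → ℕ}

theorem digit_le (hx' : IsZeroOne x') (i : ℕ) :
    (x' (i + 1) : ℝ) / 2 ^ (i + 1) ≤ 1 / 2 / 2 ^ i := by
  rw [pow_succ, div_div, mul_comm]
  gcongr
  rcases hx' (i + 1) (Nat.le_add_left 1 i) with h | h <;> simp [h]

theorem summable_digits (hx' : IsZeroOne x') :
    Summable fun i : ℕ => (x' (i + 1) : ℝ) / 2 ^ (i + 1) :=
  Summable.of_nonneg_of_le (fun _ => by positivity) hx'.digit_le
    (summable_geometric_two' 1)

theorem assocReal_eq_sum_Icc_add_tsum (hx' : IsZeroOne x') (n : ℕ) :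
    assocReal x' = ∑ i ∈ Finset.Icc 1 n, (x' i : ℝ) / 2 ^ i
      + ∑' i : ℕ, (x' (i + n + 1) : ℝ) / 2 ^ (i + n + 1) := by
  rw [assocReal, ← hx'.summable_digits.sum_add_tsum_nat_add n,
    ← Finset.Ico_add_one_right_eq_Icc, Finset.sum_Ico_eq_sum_range]
  simp only [Nat.add_comm 1, Nat.add_sub_cancel]

theorem sum_Icc_le_assocReal (hx' : IsZeroOne x') (n : ℕ) :
    ∑ i ∈ Finset.Icc 1 n, (x' i : ℝ) / 2 ^ i ≤ assocReal x' := by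
  rw [hx'.assocReal_eq_sum_Icc_add_tsum n]
  exact le_add_of_nonneg_right (tsum_nonneg fun _ => by positivity)

theorem assocReal_le_sum_Icc_add (hx' : IsZeroOne x') (n : ℕ) :
    assocReal x' ≤ ∑ i ∈ Finset.Icc 1 n, (x' i : ℝ) / 2 ^ i + 1 / 2 ^ n := by
  rw [hx'.assocReal_eq_sum_Icc_add_tsum n, ← tsum_geometric_two' (1 / 2 ^ n)]
  refine add_le_add_right (Summable.tsum_le_tsum (fun i => ?_)
    ((summable_nat_add_iff n).2 hx'.summable_digits) (summable_geometric_two' _)) _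
  calc (x' (i + n + 1) : ℝ) / 2 ^ (i + n + 1) ≤ 1 / 2 / 2 ^ (i + n) := hx'.digit_le (i + n)
    _ = 1 / 2 ^ n / 2 / 2 ^ i := by rw [pow_add]; ring

end IsZeroOne

theorem isPRational_sum_Icc (x' : ℕ → ℕ) (n : ℕ) :
    IsPRational n (∑ i ∈ Finset.Icc 1 n, (x' i : ℝ) / 2 ^ i) := by
  refine ⟨∑ i ∈ Finset.Icc 1 n, x' i * 2 ^ (n - i), ?_⟩
  push_cast
  rw [Finset.sum_mul]
  refine Finset.sum_congr rfl fun i hi => ?_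
  rw [← Nat.sub_add_cancel (Finset.mem_Icc.mp hi).2, pow_add, Nat.add_sub_cancel]
  field_simp

theorem IsPRational.eq_of_abs_sub_lt {n : ℕ} {y z : ℝ} (hy : IsPRational n y)
    (hz : IsPRational n z) (h : |y - z| < 1 / 2 ^ n) : y = z := by
  obtain ⟨q, hq⟩ := hy
  obtain ⟨r, hr⟩ := hz
  have hpos : (0 : ℝ) < 2 ^ n := by positivity
  have hqr : |(q : ℝ) - r| < 1 := by
    rw [← hq, ← hr, ← sub_mul, abs_mul, abs_of_pos hpos]
    rwa [lt_div_iff₀ hpos] at h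
  have : q = r := by
    have : |(q : ℤ) - r| < 1 := by exact_mod_cast hqr
    have := Int.abs_lt_one_iff.mp this
    omega
  rw [← mul_left_inj' hpos.ne', hq, hr, this]

theorem stmt6_general (x' : ℕ → ℕ) (hx' : IsZeroOne x') (x : ℝ) (hx : x = assocReal x')
    (p : ℕ) (y : ℝ) (hyrat : IsPRational (p - 1) y) (hy1 : 0 < x - y) (hy2 : x - y < 1 / 2 ^ p) :
    y = ∑ i ∈ Finset.Icc 1 (p - 1), (x' i : ℝ) / 2 ^ i := by
  refine hyrat.eq_of_abs_sub_lt (isPRational_sum_Icc x' (p - 1)) (abs_sub_lt_iff.mpr ⟨?_, ?_⟩)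
  · linarith [hx'.assocReal_le_sum_Icc_add (p - 1)]
  · have : (1 : ℝ) / 2 ^ p ≤ 1 / 2 ^ (p - 1) :=
      one_div_le_one_div_of_le (by positivity) (pow_le_pow_right₀ one_le_two (Nat.sub_le p 1))
    linarith [hx'.sum_Icc_le_assocReal (p - 1)]

/-- If `x'(i) = 0` for some `i > p` and `y` is `(p-1)`-rational with
`0 < x - y < 1/2^p`, then `y = Σ_{i=1}^{p-1} x'(i)·2^{-i}`; in particular such a `y`
is unique and its binary expansion agrees with `x'` below `p`. -/
theorem stmt6 (x' : ℕ → ℕ) (hx' : IsZeroOne x') (x : ℝ) (hx : x = assocReal x')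
    (p : ℕ) (hp : 1 ≤ p) (hsome : ∃ i, p < i ∧ x' i = 0)
    (y : ℝ) (hyrat : IsPRational (p - 1) y) (hy1 : 0 < x - y) (hy2 : x - y < 1 / 2 ^ p) :
    y = ∑ i ∈ Finset.Icc 1 (p - 1), (x' i : ℝ) / 2 ^ i :=
  stmt6_general x' hx' x hx p y hyrat hy1 hy2
end

section
/- Let x' be an alternating 0–1 sequence with associated real x. Then for every m ∈ ℕ, the predicate [x, 4m+3] fails: there is no real y which is (4m+2)-rational and satisfies 0 < x − y < 1/2^{4m+3}. -/
/-- The predicate `[x, p]` (for `p ≥ 1`): there is a `(p-1)`-rational `y` with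
`0 < x - y < 1/2^p`. -/
def BracketPred (x : ℝ) (p : ℕ) : Prop :=
  ∃ y : ℝ, IsPRational (p - 1) y ∧ 0 < x - y ∧ x - y < 1 / 2 ^ p

/-- A 0–1 sequence is alternating if `x'(4m+1) = 0` and `x'(4m+3) = 1` for all `m`. -/
def Alternating (x' : ℕ → ℕ) : Prop := ∀ m : ℕ, x' (4 * m + 1) = 0 ∧ x' (4 * m + 3) = 1

/-! Multiplying by `2^p` shifts the binary expansion: `2^p · x` lies between the integer `N`
formed by the first `p` digits and `N + 1`, and `N` is odd when the `p`-th digit is `1`.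
A `(p-1)`-rational `y` has `2^p · y = 2q` even, so `0 < x - y < 2^{-p}` would force
`2q < 2^p · x < 2q + 1`, which leaves no room for an odd `N ≤ 2^p · x ≤ N + 1`. -/

open Finset

def binaryPrefix (x' : ℕ → ℕ) : ℕ → ℕ
  | 0 => 0
  | n + 1 => 2 * binaryPrefix x' n + x' (n + 1)

theorem binaryPrefix_eq_two_pow_mul_sum (x' : ℕ → ℕ) (n : ℕ) :
    (binaryPrefix x' n : ℝ) = 2 ^ n * ∑ i ∈ range n, (x' (i + 1) : ℝ) / 2 ^ (i + 1) := by
  induction n with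
  | zero => simp [binaryPrefix]
  | succ n ih =>
    rw [binaryPrefix, sum_range_succ]
    push_cast
    rw [ih]
    field_simp
    ring

namespace IsZeroOne

variable {x' : ℕ → ℕ}

theorem term_le (hx' : IsZeroOne x') (n i : ℕ) :
    (x' (i + n + 1) : ℝ) / 2 ^ (i + n + 1) ≤ 1 / 2 ^ n / 2 / 2 ^ i := by
  have hdigit : (x' (i + n + 1) : ℝ) ≤ 1 := by
    rcases hx' (i + n + 1) (by omega) with h | h <;> simp [h]
  calc (x' (i + n + 1) : ℝ) / 2 ^ (i + n + 1) ≤ 1 / 2 ^ (i + n + 1) := by gcongr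
    _ = 1 / 2 ^ n / 2 / 2 ^ i := by rw [pow_succ, pow_add]; field_simp

theorem summable_tail (hx' : IsZeroOne x') (n : ℕ) :
    Summable fun i : ℕ => (x' (i + n + 1) : ℝ) / 2 ^ (i + n + 1) :=
  (summable_geometric_two' _).of_nonneg_of_le (fun _ => by positivity) (hx'.term_le n)

theorem tsum_tail_le (hx' : IsZeroOne x') (n : ℕ) :
    ∑' i : ℕ, (x' (i + n + 1) : ℝ) / 2 ^ (i + n + 1) ≤ 1 / 2 ^ n := by
  calc ∑' i : ℕ, (x' (i + n + 1) : ℝ) / 2 ^ (i + n + 1)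
      ≤ ∑' i : ℕ, 1 / 2 ^ n / 2 / 2 ^ i :=
        (hx'.summable_tail n).tsum_le_tsum (hx'.term_le n) (summable_geometric_two' _)
    _ = 1 / 2 ^ n := tsum_geometric_two' _

theorem assocReal_mul_two_pow_mem_Icc (hx' : IsZeroOne x') (n : ℕ) :
    assocReal x' * 2 ^ n ∈ Set.Icc (binaryPrefix x' n : ℝ) (binaryPrefix x' n + 1) := by
  have hsplit := (hx'.summable_tail 0).sum_add_tsum_nat_add n
  simp only [add_zero] at hsplit
  set T := ∑' i : ℕ, (x' (i + n + 1) : ℝ) / 2 ^ (i + n + 1)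
  have hT : T * 2 ^ n ≤ 1 := by
    have := mul_le_mul_of_nonneg_right (hx'.tsum_tail_le n) (by positivity : (0 : ℝ) ≤ 2 ^ n)
    rwa [one_div_mul_cancel (by positivity)] at this
  have hT0 : 0 ≤ T * 2 ^ n := by positivity
  rw [assocReal, ← hsplit, add_mul, binaryPrefix_eq_two_pow_mul_sum, mul_comm (2 ^ n : ℝ)]
  constructor <;> linarith

end IsZeroOne

theorem not_bracketPred_of_odd {x : ℝ} {p N : ℕ} (hp : 1 ≤ p) (hN : Odd N)
    (hx : x * 2 ^ p ∈ Set.Icc (N : ℝ) (N + 1)) : ¬ BracketPred x p := by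
  rintro ⟨y, ⟨q, hq⟩, hlo, hhi⟩
  have hy : y * 2 ^ p = 2 * q := by
    rw [← Nat.sub_add_cancel hp, pow_succ, ← mul_assoc, hq, mul_comm]
  have hpos : (0 : ℝ) < 2 ^ p := by positivity
  have hgt : (2 * q : ℝ) < x * 2 ^ p := by
    have := mul_lt_mul_of_pos_right (sub_pos.1 hlo) hpos
    linarith
  have hlt : x * 2 ^ p < 2 * q + 1 := by
    have := mul_lt_mul_of_pos_right hhi hpos
    rw [sub_mul, one_div_mul_cancel hpos.ne'] at this
    linarith
  have hN_lt : N < 2 * q + 1 := by exact_mod_cast hx.1.trans_lt hlt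
  have hN_succ_le : N + 1 ≤ 2 * q := by
    obtain ⟨k, rfl⟩ := hN
    omega
  have : (N : ℝ) + 1 ≤ 2 * q := by exact_mod_cast hN_succ_le
  linarith [hx.2]

/-- If `x'` is alternating, then `[x, 4m+3]` fails for every `m`. -/
theorem stmt10 (x' : ℕ → ℕ) (hx' : IsZeroOne x') (x : ℝ) (hx : x = assocReal x')
    (halt : Alternating x') :
    ∀ m : ℕ, ¬ BracketPred x (4 * m + 3) := by
  intro m
  have hodd : Odd (binaryPrefix x' (4 * m + 3)) := by
    rw [binaryPrefix, (halt m).2]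
    exact odd_two_mul_add_one _
  subst hx
  exact not_bracketPred_of_odd (by omega) hodd (hx'.assocReal_mul_two_pow_mem_Icc _)
end

section
/- Let x' and y' be alternating 0–1 sequences whose associated reals are equal. Then x'(i) = y'(i) for every i ≥ 1. (A real number has at most one binary expansion satisfying the alternation condition.) -/
open Filter Finset

noncomputable def binaryTerm (x' : ℕ → ℕ) (i : ℕ) : ℝ := (x' (i + 1) : ℝ) / 2 ^ (i + 1)

lemma binaryTerm_nonneg (x' : ℕ → ℕ) (i : ℕ) : 0 ≤ binaryTerm x' i := by
  unfold binaryTerm; positivity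

lemma tsum_half_pow_nat_add_succ (k : ℕ) : ∑' i, ((1 : ℝ) / 2) ^ (i + k + 1) = (1 / 2) ^ k := by
  simp_rw [add_assoc, pow_add]
  rw [tsum_mul_right, tsum_geometric_two, pow_succ]
  ring

namespace IsZeroOne

variable {x' : ℕ → ℕ} (hx : IsZeroOne x')
include hx

lemma binaryTerm_le (i : ℕ) : binaryTerm x' i ≤ (1 / 2) ^ (i + 1) := by
  have hle : (x' (i + 1) : ℝ) ≤ 1 := by
    rcases hx (i + 1) (Nat.le_add_left 1 i) with h | h <;> simp [h]
  rw [binaryTerm, one_div_pow]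
  gcongr

lemma summable_binaryTerm : Summable (binaryTerm x') :=
  .of_nonneg_of_le (binaryTerm_nonneg x') hx.binaryTerm_le
    ((summable_nat_add_iff 1).mpr summable_geometric_two)

lemma tsum_binaryTerm_nat_add_lt {k j : ℕ} (hj : x' (j + k + 1) = 0) :
    ∑' i, binaryTerm x' (i + k) < (1 / 2) ^ k := by
  rw [← tsum_half_pow_nat_add_succ]
  refine Summable.tsum_lt_tsum_of_nonneg (i := j) (fun i ↦ binaryTerm_nonneg x' _)
    (fun i ↦ hx.binaryTerm_le _) ?_ ((summable_nat_add_iff (k + 1)).mpr summable_geometric_two)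
  simp [binaryTerm, hj]

end IsZeroOne

/-- The later `0` digit of `x'` is what makes this strict: `0.0111… = 0.1000…` in binary. -/
lemma assocReal_lt_of_first_diff {x' y' : ℕ → ℕ} (hx : IsZeroOne x') (hy : IsZeroOne y')
    (hx₀ : ∃ᶠ k in atTop, x' k = 0) {n : ℕ} (hagree : ∀ i < n, x' (i + 1) = y' (i + 1))
    (hxn : x' (n + 1) = 0) (hyn : y' (n + 1) = 1) : assocReal x' < assocReal y' := by
  obtain ⟨k, hk, hk₀⟩ := hx₀.forall_exists_of_atTop (n + 2)
  obtain ⟨j, rfl⟩ : ∃ j, k = j + (n + 1) + 1 := ⟨k - (n + 2), by omega⟩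
  have hprefix : ∑ i ∈ range n, binaryTerm x' i = ∑ i ∈ range n, binaryTerm y' i :=
    sum_congr rfl fun i hi ↦ by rw [binaryTerm, binaryTerm, hagree i (mem_range.mp hi)]
  calc assocReal x'
      = ∑ i ∈ range (n + 1), binaryTerm x' i + ∑' i, binaryTerm x' (i + (n + 1)) :=
        (hx.summable_binaryTerm.sum_add_tsum_nat_add (n + 1)).symm
    _ < ∑ i ∈ range (n + 1), binaryTerm x' i + (1 / 2) ^ (n + 1) := by
        gcongr
        exact hx.tsum_binaryTerm_nat_add_lt hk₀
    _ = ∑ i ∈ range (n + 1), binaryTerm y' i := by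
        rw [sum_range_succ, sum_range_succ, hprefix]
        simp [binaryTerm, hxn, hyn]
    _ ≤ assocReal y' :=
        hy.summable_binaryTerm.sum_le_tsum _ fun i _ ↦ binaryTerm_nonneg y' i

theorem eq_of_assocReal_eq {x' y' : ℕ → ℕ} (hx : IsZeroOne x') (hy : IsZeroOne y')
    (hx₀ : ∃ᶠ k in atTop, x' k = 0) (hy₀ : ∃ᶠ k in atTop, y' k = 0)
    (heq : assocReal x' = assocReal y') : ∀ i, 1 ≤ i → x' i = y' i := by
  suffices h : ∀ n, x' (n + 1) = y' (n + 1) from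
    fun i hi ↦ by simpa [Nat.sub_add_cancel hi] using h (i - 1)
  intro n
  induction n using Nat.strong_induction_on with
  | _ n ih =>
    rcases hx (n + 1) (by omega) with hxn | hxn <;> rcases hy (n + 1) (by omega) with hyn | hyn
    · rw [hxn, hyn]
    · exact absurd heq (assocReal_lt_of_first_diff hx hy hx₀ ih hxn hyn).ne
    · exact absurd heq (assocReal_lt_of_first_diff hy hx hy₀ (fun i hi ↦ (ih i hi).symm) hyn hxn).ne'
    · rw [hxn, hyn]

lemma Alternating.frequently_eq_zero {x' : ℕ → ℕ} (hx : Alternating x') :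
    ∃ᶠ k in atTop, x' k = 0 :=
  frequently_atTop.mpr fun a ↦ ⟨4 * a + 1, by omega, (hx a).1⟩

/-- Two alternating 0–1 sequences with the same associated real agree at every
index `i ≥ 1`. -/
theorem stmt14 (x' y' : ℕ → ℕ) (hx' : IsZeroOne x') (hy' : IsZeroOne y')
    (haltx : Alternating x') (halty : Alternating y')
    (heq : assocReal x' = assocReal y') :
    ∀ i, 1 ≤ i → x' i = y' i :=
  eq_of_assocReal_eq hx' hy' haltx.frequently_eq_zero halty.frequently_eq_zero heq
end

section
/- Fix a function e : ℕ×ℕ → ℕ which is a bijection from ℕ×ℕ onto the positive integers. Let α : ℕ → ℕ and let u' be a 0–1 sequence with associated real u such that u'(4m+1) = 0 and u'(4m+3) = 1 for every m ∈ ℕ, and for all k, m ∈ ℕ, u'(2·e(k,m)) = 1 if and only if α(k) = m. Then for all k, m ∈ ℕ: α(k) = m if and only if ([u, 4p+1] holds and [u, 4p+3] fails for every p ∈ ℕ, and [u, 2·e(k,m)] fails). -/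
/-!
Write `u · 2^n = N + t` with `N` a natural number and `t` the value of the binary digits of `u`
after position `n`. For an alternating sequence every such tail contains a `0` and a `1`, so
`0 < t < 1`; hence the only candidate for `y` in `[u, n+1]` is `N / 2^n`, and `[u, n+1]` holds
iff `t < 1/2`, i.e. iff the digit `u'(n+1)` is `0`. The theorem then just reads off digits.
-/

lemma IsZeroOne.le_one_s16 {x' : ℕ → ℕ} (hx : IsZeroOne x') {i : ℕ} (hi : 1 ≤ i) : x' i ≤ 1 := by
  rcases hx i hi with h | h <;> omega

lemma hasSum_one_div_two_pow_succ : HasSum (fun i : ℕ => (1 : ℝ) / 2 ^ (i + 1)) 1 := by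
  convert hasSum_geometric_two' 1 using 1
  ext i
  rw [pow_succ]
  ring

/-- The number `0.x'(n+1) x'(n+2) …` in binary. -/
noncomputable def binaryTail (x' : ℕ → ℕ) (n : ℕ) : ℝ :=
  ∑' i : ℕ, (x' (n + 1 + i) : ℝ) / 2 ^ (i + 1)

section binaryTail

variable {x' : ℕ → ℕ}

lemma IsZeroOne.summable_tail_s16 (hx : IsZeroOne x') (n : ℕ) :
    Summable fun i : ℕ => (x' (n + 1 + i) : ℝ) / 2 ^ (i + 1) :=
  .of_nonneg_of_le (fun _ => by positivity)
    (fun i => by gcongr; exact Nat.cast_le_one.mpr (hx.le_one_s16 (by omega)))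
    hasSum_one_div_two_pow_succ.summable

lemma binaryTail_pos_of_eq_one (hx : IsZeroOne x') {n i : ℕ} (hi : x' (n + 1 + i) = 1) :
    0 < binaryTail x' n :=
  (hx.summable_tail_s16 n).tsum_pos (fun _ => by positivity) i (by rw [hi]; positivity)

lemma binaryTail_lt_one_of_eq_zero (hx : IsZeroOne x') {n i : ℕ} (hi : x' (n + 1 + i) = 0) :
    binaryTail x' n < 1 := by
  rw [← hasSum_one_div_two_pow_succ.tsum_eq]
  refine (hx.summable_tail_s16 n).tsum_lt_tsum (i := i)
    (fun j => by gcongr; exact Nat.cast_le_one.mpr (hx.le_one_s16 (by omega))) ?_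
    hasSum_one_div_two_pow_succ.summable
  rw [hi, Nat.cast_zero, zero_div]
  positivity

lemma binaryTail_eq (hx : IsZeroOne x') (n : ℕ) :
    binaryTail x' n = (x' (n + 1) : ℝ) / 2 + binaryTail x' (n + 1) / 2 := by
  rw [binaryTail, (hx.summable_tail_s16 n).tsum_eq_zero_add, binaryTail, ← tsum_div_const]
  congr 1
  · norm_num
  · refine tsum_congr fun i => ?_
    rw [show n + 1 + (i + 1) = n + 1 + 1 + i by omega, pow_succ]
    ring

lemma exists_assocReal_mul_two_pow (hx : IsZeroOne x') (n : ℕ) :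
    ∃ N : ℕ, assocReal x' * 2 ^ n = N + binaryTail x' n := by
  induction n with
  | zero =>
    refine ⟨0, ?_⟩
    simp only [pow_zero, mul_one, Nat.cast_zero, zero_add, assocReal, binaryTail]
    exact tsum_congr fun i => by rw [Nat.add_comm 1 i]
  | succ n ih =>
    obtain ⟨N, hN⟩ := ih
    refine ⟨2 * N + x' (n + 1), ?_⟩
    rw [pow_succ, ← mul_assoc, hN, binaryTail_eq hx n]
    push_cast
    ring

lemma Alternating.binaryTail_pos (hx : IsZeroOne x') (halt : Alternating x') (n : ℕ) :
    0 < binaryTail x' n :=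
  binaryTail_pos_of_eq_one hx (i := 3 * n + 2) <| by
    rw [show n + 1 + (3 * n + 2) = 4 * n + 3 by omega]; exact (halt n).2

lemma Alternating.binaryTail_lt_one (hx : IsZeroOne x') (halt : Alternating x') (n : ℕ) :
    binaryTail x' n < 1 :=
  binaryTail_lt_one_of_eq_zero hx (i := 3 * n) <| by
    rw [show n + 1 + 3 * n = 4 * n + 1 by omega]; exact (halt n).1

end binaryTail

/-- If `x · 2^n = N + t` with `0 < t < 1`, then `[x, n+1]` can only be witnessed by `N / 2^n`. -/
lemma bracketPred_succ_iff {x t : ℝ} {n N : ℕ} (hx : x * 2 ^ n = N + t) (ht₀ : 0 < t)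
    (ht₁ : t < 1) : BracketPred x (n + 1) ↔ t < 1 / 2 := by
  have h2n : (0 : ℝ) < 2 ^ n := by positivity
  have hscale : ∀ y : ℝ, (x - y) * 2 ^ n = N + t - y * 2 ^ n := fun y => by rw [sub_mul, hx]
  have hhalf : (1 : ℝ) / 2 ^ (n + 1) * 2 ^ n = 1 / 2 := by rw [pow_succ]; field_simp
  simp only [BracketPred, Nat.add_sub_cancel, IsPRational]
  constructor
  · rintro ⟨y, ⟨q, hq⟩, hpos, hlt⟩
    have hpos' : 0 < (N : ℝ) + t - q := by
      rw [← hq, ← hscale]; exact mul_pos hpos h2n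
    have hlt' : (N : ℝ) + t - q < 1 / 2 := by
      rw [← hq, ← hscale, ← hhalf]; exact mul_lt_mul_of_pos_right hlt h2n
    by_contra! ht
    have hNq : N < q := by exact_mod_cast (by linarith : (N : ℝ) < q)
    have hqN : q < N + 1 := by exact_mod_cast (by linarith : (q : ℝ) < N + 1)
    omega
  · intro ht
    refine ⟨N / 2 ^ n, ⟨N, div_mul_cancel₀ _ h2n.ne'⟩, ?_, ?_⟩
    · have : 0 < (x - N / 2 ^ n) * 2 ^ n := by
        rw [hscale, div_mul_cancel₀ _ h2n.ne']; linarith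
      exact pos_of_mul_pos_left this h2n.le
    · refine lt_of_mul_lt_mul_right ?_ h2n.le
      rw [hscale, div_mul_cancel₀ _ h2n.ne', hhalf]
      linarith

lemma bracketPred_assocReal_iff {x' : ℕ → ℕ} (hx : IsZeroOne x') (halt : Alternating x')
    {p : ℕ} (hp : 1 ≤ p) : BracketPred (assocReal x') p ↔ x' p = 0 := by
  obtain ⟨n, rfl⟩ : ∃ n, p = n + 1 := ⟨p - 1, by omega⟩
  obtain ⟨N, hN⟩ := exists_assocReal_mul_two_pow hx n
  rw [bracketPred_succ_iff hN (halt.binaryTail_pos hx n) (halt.binaryTail_lt_one hx n),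
    binaryTail_eq hx n]
  have := halt.binaryTail_pos hx (n + 1)
  have := halt.binaryTail_lt_one hx (n + 1)
  rcases hx (n + 1) (by omega) with h | h <;> rw [h] <;> norm_num <;> linarith

theorem stmt16_general (e : ℕ × ℕ → ℕ)
    (hrange : Set.range e = {n : ℕ | 1 ≤ n})
    (α : ℕ → ℕ) (u' : ℕ → ℕ) (hu' : IsZeroOne u') (u : ℝ) (hu : u = assocReal u')
    (halt : Alternating u')
    (hcode : ∀ k m : ℕ, u' (2 * e (k, m)) = 1 ↔ α k = m) :
    ∀ k m : ℕ, α k = m ↔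
      ((∀ p : ℕ, BracketPred u (4 * p + 1) ∧ ¬ BracketPred u (4 * p + 3)) ∧
        ¬ BracketPred u (2 * e (k, m))) := by
  intro k m
  subst hu
  have hkm : 1 ≤ 2 * e (k, m) := by
    have : e (k, m) ∈ {n : ℕ | 1 ≤ n} := hrange ▸ ⟨(k, m), rfl⟩
    exact Nat.mul_pos two_pos this
  have hdigits : ∀ p, BracketPred (assocReal u') (4 * p + 1) ∧
      ¬ BracketPred (assocReal u') (4 * p + 3) := fun p => by
    rw [bracketPred_assocReal_iff hu' halt (by omega), bracketPred_assocReal_iff hu' halt (by omega),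
      (halt p).1, (halt p).2]
    simp
  rw [bracketPred_assocReal_iff hu' halt hkm, ← hcode]
  have := hu'.le_one_s16 hkm
  exact ⟨fun h => ⟨hdigits, by omega⟩, fun h => by omega⟩

/-- Under the coding conditions, `α(k) = m` holds iff the real code `u` satisfies
the ordered-ring condition: `[u, 4p+1]` holds and `[u, 4p+3]` fails for every `p`,
and `[u, 2·e(k,m)]` fails. -/
theorem stmt16 (e : ℕ × ℕ → ℕ) (hinj : Function.Injective e)
    (hrange : Set.range e = {n : ℕ | 1 ≤ n})
    (α : ℕ → ℕ) (u' : ℕ → ℕ) (hu' : IsZeroOne u') (u : ℝ) (hu : u = assocReal u')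
    (halt : Alternating u')
    (hcode : ∀ k m : ℕ, u' (2 * e (k, m)) = 1 ↔ α k = m) :
    ∀ k m : ℕ, α k = m ↔
      ((∀ p : ℕ, BracketPred u (4 * p + 1) ∧ ¬ BracketPred u (4 * p + 3)) ∧
        ¬ BracketPred u (2 * e (k, m))) :=
  stmt16_general e hrange α u' hu' u hu halt hcode
end
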